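/- arXiv:1807.01478 — 4 statements merged into one kernel-verified Lean document; each statement's English description precedes it below -/
import Mathlib

section
/- For every n×m integer unit-Monge matrix M with n, m ≥ 2, there exist a right substochastic binary matrix P with 2(n−1) rows and m−1 columns, an integer vector U of length n, and an integer vector V of length m, such that for all 1 ≤ x ≤ n and 1 ≤ y ≤ m one has M[x,y] = U[x] + V[y] + Σ_{i=2x−1}^{2(n−1)} Σ_{j=y}^{m−1} P[i,j] (empty sums being 0). -/
/-- An `n × m` integer matrix (1-based indexing) is Monge. -/
def IsMonge (n m : ℕ) (M : ℕ → ℕ → ℤ) : Prop :=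
  ∀ i j, 1 ≤ i → i + 1 ≤ n → 1 ≤ j → j + 1 ≤ m →
    M (i + 1) j - M i j ≤ M (i + 1) (j + 1) - M i (j + 1)

/-- An `n × m` integer matrix (1-based indexing) is unit-Monge. -/
def IsUnitMonge (n m : ℕ) (M : ℕ → ℕ → ℤ) : Prop :=
  IsMonge n m M ∧
    ∀ i j, 1 ≤ i → i + 1 ≤ n → 1 ≤ j → j ≤ m →
      M (i + 1) j - M i j = -1 ∨ M (i + 1) j - M i j = 0 ∨ M (i + 1) j - M i j = 1

/-- An `n × m` binary matrix (1-based indexing) is right substochastic: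
every entry is 0 or 1, and every row has at most one nonzero entry. -/
def RightSubstochastic (n m : ℕ) (P : ℕ → ℕ → ℤ) : Prop :=
  (∀ i j, 1 ≤ i → i ≤ n → 1 ≤ j → j ≤ m → P i j = 0 ∨ P i j = 1) ∧
  (∀ i, 1 ≤ i → i ≤ n → ∀ j j', 1 ≤ j → j ≤ m → 1 ≤ j' → j' ≤ m →
    P i j ≠ 0 → P i j' ≠ 0 → j = j')

/-- prefix-sum matrix of the density of `M`. -/
def sAux (M : ℕ → ℕ → ℤ) (i j : ℕ) : ℤ :=
  M (i + 1) (j + 1) - M i (j + 1) - M (i + 1) 1 + M i 1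

/-- The substochastic matrix: odd rows carry increments of `min (s) 1`,
even rows carry increments of `max (s - 1) 0`. -/
def PAux (M : ℕ → ℕ → ℤ) (r j : ℕ) : ℤ :=
  if r % 2 = 1 then
    min (sAux M ((r + 1) / 2) j) 1 - min (sAux M ((r + 1) / 2) (j - 1)) 1
  else
    max (sAux M (r / 2) j - 1) 0 - max (sAux M (r / 2) (j - 1) - 1) 0

/-- Telescoping sum over `Icc`. -/
lemma tele_sum (f : ℕ → ℤ) : ∀ (b : ℕ), ∀ a, 1 ≤ a → a ≤ b + 1 →
    ∑ j ∈ Finset.Icc a b, (f j - f (j - 1)) = f b - f (a - 1) := by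
  intro b
  induction b with
  | zero =>
    intro a ha hab
    have : a = 1 := by omega
    subst this
    simp
  | succ b ih =>
    intro a ha hab
    by_cases hcase : a ≤ b + 1
    · rw [Finset.sum_Icc_succ_top hcase, ih a ha hcase]
      have : b + 1 - 1 = b := by omega
      rw [this]; ring
    · have : a = b + 2 := by omega
      subst this
      rw [Finset.Icc_eq_empty (by omega)]
      simp

/-- Pairing up consecutive rows. -/
lemma pair_sum (F : ℕ → ℤ) (x : ℕ) (hx : 1 ≤ x) : ∀ (k : ℕ),
    ∑ r ∈ Finset.Icc (2 * x - 1) (2 * k), F r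
      = ∑ i ∈ Finset.Icc x k, (F (2 * i - 1) + F (2 * i)) := by
  intro k
  induction k with
  | zero =>
    rw [Finset.Icc_eq_empty (by omega), Finset.Icc_eq_empty (by omega)]
    simp
  | succ k ih =>
    by_cases hcase : x ≤ k + 1
    · have h1 : 2 * (k + 1) = (2 * k + 1) + 1 := by ring
      have h2 : (2 * x - 1) ≤ (2 * k + 1) + 1 := by omega
      have h3 : (2 * x - 1) ≤ 2 * k + 1 := by omega
      rw [h1, Finset.sum_Icc_succ_top h2]
      have h4 : 2 * k + 1 = (2 * k) + 1 := rfl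
      rw [h4, Finset.sum_Icc_succ_top h3, ih,
        Finset.sum_Icc_succ_top (show x ≤ k + 1 by omega)]
      have e1 : 2 * (k + 1) - 1 = 2 * k + 1 := by omega
      have e2 : 2 * k + 1 + 1 = 2 * (k + 1) := by omega
      rw [e1, e2]; ring
    · rw [Finset.Icc_eq_empty (by omega), Finset.Icc_eq_empty (by omega)]
      simp

theorem unitMonge_decomposition (n m : ℕ) (hn : 2 ≤ n) (hm : 2 ≤ m)
    (M : ℕ → ℕ → ℤ) (hM : IsUnitMonge n m M) :
    ∃ (P : ℕ → ℕ → ℤ) (U V : ℕ → ℤ),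
      RightSubstochastic (2 * (n - 1)) (m - 1) P ∧
      ∀ x y, 1 ≤ x → x ≤ n → 1 ≤ y → y ≤ m →
        M x y = U x + V y +
          ∑ i ∈ Finset.Icc (2 * x - 1) (2 * (n - 1)),
            ∑ j ∈ Finset.Icc y (m - 1), P i j := by
  obtain ⟨hMonge, hUnit⟩ := hM
  set s : ℕ → ℕ → ℤ := sAux M with hs
  -- step monotonicity of s in j
  have hstep : ∀ i j, 1 ≤ i → i + 1 ≤ n → 1 ≤ j → j + 1 ≤ m →
      s i (j - 1) ≤ s i j := by
    intro i j hi hin hj hjm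
    have := hMonge i j hi hin hj hjm
    have hj1 : j - 1 + 1 = j := by omega
    simp only [hs, sAux, hj1]
    linarith
  -- monotonicity of s in j
  have hmono : ∀ i, 1 ≤ i → i + 1 ≤ n → ∀ a b, a ≤ b → b + 1 ≤ m →
      s i a ≤ s i b := by
    intro i hi hin a b hab hbm
    induction b, hab using Nat.le_induction with
    | base => exact le_rfl
    | succ b hab ih =>
      have h1 : s i a ≤ s i b := ih (by omega)
      have h2 : s i (b + 1 - 1) ≤ s i (b + 1) :=
        hstep i (b + 1) hi hin (by omega) (by omega)
      simp only [Nat.add_sub_cancel] at h2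
      linarith
  have hs0 : ∀ i, s i 0 = 0 := by intro i; simp [hs, sAux]
  -- lower bound
  have hlow : ∀ i j, 1 ≤ i → i + 1 ≤ n → j + 1 ≤ m → 0 ≤ s i j := by
    intro i j hi hin hjm
    have := hmono i hi hin 0 j (Nat.zero_le _) hjm
    rw [hs0] at this; exact this
  -- upper bound
  have hup : ∀ i j, 1 ≤ i → i + 1 ≤ n → j + 1 ≤ m → s i j ≤ 2 := by
    intro i j hi hin hjm
    rcases Nat.eq_zero_or_pos j with hj0 | hj1
    · subst hj0; rw [hs0]; norm_num
    · have h1 := hUnit i (j + 1) hi hin (by omega) (by omega)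
      have h2 := hUnit i 1 hi hin (by omega) (by omega)
      simp only [hs, sAux]
      omega
  refine ⟨PAux M, fun x => M x m, fun y => M n y - M n m, ⟨?_, ?_⟩, ?_⟩
  · -- entries are 0 or 1
    intro r j hr hrn hj hjm
    have key : ∀ i, 1 ≤ i → i + 1 ≤ n →
        (min (s i j) 1 - min (s i (j - 1)) 1 = 0 ∨
         min (s i j) 1 - min (s i (j - 1)) 1 = 1) ∧
        (max (s i j - 1) 0 - max (s i (j - 1) - 1) 0 = 0 ∨
         max (s i j - 1) 0 - max (s i (j - 1) - 1) 0 = 1) := by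
      intro i hi hin
      have h1 := hstep i j hi hin hj (by omega)
      have h2 := hlow i (j - 1) hi hin (by omega)
      have h3 := hup i j hi hin (by omega)
      constructor
      · omega
      · omega
    unfold PAux
    split
    · exact (key ((r + 1) / 2) (by omega) (by omega)).1
    · have hr2 : r % 2 = 0 := by omega
      exact (key (r / 2) (by omega) (by omega)).2
  · -- at most one nonzero per row
    intro r hr hrn j j' hj hjm hj' hj'm hne hne'
    by_contra hjj
    -- wlog j < j'
    have main : ∀ a b, 1 ≤ a → a ≤ m - 1 → 1 ≤ b → b ≤ m - 1 → a < b →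
        PAux M r a ≠ 0 → PAux M r b ≠ 0 → False := by
      intro a b ha ham hb hbm hab hnea hneb
      have hi : ∀ i, 1 ≤ i → i + 1 ≤ n →
          (min (s i a) 1 ≠ min (s i (a - 1)) 1 →
           min (s i b) 1 ≠ min (s i (b - 1)) 1 → False) ∧
          (max (s i a - 1) 0 ≠ max (s i (a - 1) - 1) 0 →
           max (s i b - 1) 0 ≠ max (s i (b - 1) - 1) 0 → False) := by
        intro i hi1 hin
        have hla := hlow i (a - 1) hi1 hin (by omega)
        have hlb := hlow i (b - 1) hi1 hin (by omega)
        have hua := hup i a hi1 hin (by omega)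
        have hub := hup i b hi1 hin (by omega)
        have hsa := hstep i a hi1 hin ha (by omega)
        have hsb := hstep i b hi1 hin hb (by omega)
        have hchain : s i a ≤ s i (b - 1) := hmono i hi1 hin a (b - 1) (by omega) (by omega)
        constructor
        · intro h1 h2; omega
        · intro h1 h2; omega
      unfold PAux at hnea hneb
      rw [← hs] at hnea hneb
      by_cases hpar : r % 2 = 1
      · simp only [hpar, if_pos] at hnea hneb
        exact (hi ((r + 1) / 2) (by omega) (by omega)).1
          (by intro h; apply hnea; omega) (by intro h; apply hneb; omega)
      · simp only [hpar, if_neg, if_false] at hnea hneb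
        exact (hi (r / 2) (by omega) (by omega)).2
          (by intro h; apply hnea; omega) (by intro h; apply hneb; omega)
    rcases Nat.lt_or_ge j j' with h | h
    · exact main j j' hj hjm hj' hj'm h hne hne'
    · exact main j' j hj' hj'm hj hjm (by omega) hne' hne
  · -- the decomposition identity
    intro x y hx hxn hy hym
    have hpair := pair_sum (fun r => ∑ j ∈ Finset.Icc y (m - 1), PAux M r j) x hx (n - 1)
    rw [hpair]
    -- evaluate the paired inner sums
    have hinner : ∀ i ∈ Finset.Icc x (n - 1),
        ((fun r => ∑ j ∈ Finset.Icc y (m - 1), PAux M r j) (2 * i - 1) +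
         (fun r => ∑ j ∈ Finset.Icc y (m - 1), PAux M r j) (2 * i))
        = (M (i + 1) m - M i m) - (M (i + 1) y - M i y) := by
      intro i hi
      simp only [Finset.mem_Icc] at hi
      obtain ⟨hxi, hin⟩ := hi
      have hi1 : 1 ≤ i := le_trans hx hxi
      simp only
      rw [← Finset.sum_add_distrib]
      have heval : ∀ j ∈ Finset.Icc y (m - 1),
          PAux M (2 * i - 1) j + PAux M (2 * i) j = s i j - s i (j - 1) := by
        intro j hj
        have hodd : (2 * i - 1) % 2 = 1 := by omega
        have hoddi : (2 * i - 1 + 1) / 2 = i := by omega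
        have heven : (2 * i) % 2 = 0 := by omega
        have heveni : (2 * i) / 2 = i := by omega
        unfold PAux
        rw [if_pos hodd, if_neg (by omega), hoddi, heveni]
        have : ∀ u v : ℤ, (min u 1 - min v 1) + (max (u - 1) 0 - max (v - 1) 0) = u - v := by
          intro u v; omega
        exact this _ _
      rw [Finset.sum_congr rfl heval, tele_sum (s i) (m - 1) y hy (by omega)]
      have e1 : m - 1 + 1 = m := by omega
      have e2 : y - 1 + 1 = y := by omega
      simp only [hs, sAux, e1, e2]
      ring
    rw [Finset.sum_congr rfl hinner]
    -- telescope the outer sum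
    have houter : ∀ i ∈ Finset.Icc x (n - 1),
        (M (i + 1) m - M i m) - (M (i + 1) y - M i y)
        = (fun t => M (t + 1) m - M (t + 1) y) i -
          (fun t => M (t + 1) m - M (t + 1) y) (i - 1) := by
      intro i hi
      simp only [Finset.mem_Icc] at hi
      have e : i - 1 + 1 = i := by omega
      simp only [e]
      ring
    rw [Finset.sum_congr rfl houter,
      tele_sum (fun t => M (t + 1) m - M (t + 1) y) (n - 1) x hx (by omega)]
    have e1 : n - 1 + 1 = n := by omega
    have e2 : x - 1 + 1 = x := by omega
    simp only [e1, e2]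
    ring
end

section
/- Let M be a lower triangular unit-Monge matrix of order n. Define the full n×n integer matrix M̃ by M̃[i,j] = M[i,j] for i ≥ j, and M̃[i,j] = M[j,j] − Σ_{k=i}^{j−1} (M[k+1,k] − M[k,k]) for i < j. Then M̃ is an n×n unit-Monge matrix. -/
/-- A lower triangular unit-Monge matrix of order `n` (1-based indexing):
the entries `M[i,j]` for `1 ≤ j ≤ i ≤ n` satisfy the unit condition whenever
`1 ≤ j ≤ i ≤ n - 1` and the Monge condition whenever `1 ≤ j < i ≤ n - 1`. -/
def IsLowerTriUnitMonge (n : ℕ) (M : ℕ → ℕ → ℤ) : Prop :=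
  (∀ i j, 1 ≤ j → j ≤ i → i + 1 ≤ n →
    M (i + 1) j - M i j = -1 ∨ M (i + 1) j - M i j = 0 ∨ M (i + 1) j - M i j = 1) ∧
  (∀ i j, 1 ≤ j → j < i → i + 1 ≤ n →
    M (i + 1) j - M i j ≤ M (i + 1) (j + 1) - M i (j + 1))

theorem extension_is_unitMonge (n : ℕ) (M : ℕ → ℕ → ℤ)
    (hM : IsLowerTriUnitMonge n M) (Mt : ℕ → ℕ → ℤ)
    (hMtLow : ∀ i j, 1 ≤ j → j ≤ i → i ≤ n → Mt i j = M i j)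
    (hMtUp : ∀ i j, 1 ≤ i → i < j → j ≤ n →
      Mt i j = M j j - ∑ k ∈ Finset.Icc i (j - 1), (M (k + 1) k - M k k)) :
    IsUnitMonge n n Mt := by
  obtain ⟨hu, hm⟩ := hM
  have sum_bot : ∀ (a b : ℕ), a ≤ b →
      ∑ k ∈ Finset.Icc a b, (M (k + 1) k - M k k)
        = (M (a + 1) a - M a a) + ∑ k ∈ Finset.Icc (a + 1) b, (M (k + 1) k - M k k) := by
    intro a b h
    rw [Finset.Icc_add_one_left_eq_Ioc, ← Finset.Ioc_insert_left h, Finset.sum_insert (by simp)]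
  have key : ∀ i j, 1 ≤ i → i < j → j ≤ n →
      Mt (i + 1) j - Mt i j = M (i + 1) i - M i i := by
    intro i j hi hij hjn
    rcases eq_or_lt_of_le (Nat.succ_le_of_lt hij) with h | h
    · subst h
      rw [hMtLow (i + 1) (i + 1) (by omega) le_rfl hjn,
          hMtUp i (i + 1) hi hij hjn]
      have hI : Finset.Icc i (i + 1 - 1) = {i} := by simp
      rw [hI, Finset.sum_singleton]
      ring
    · rw [hMtUp (i + 1) j (by omega) h hjn, hMtUp i j hi hij hjn,
          sum_bot i (j - 1) (by omega)]
      ring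
  constructor
  · intro i j hi hin hj hjn
    rcases le_or_gt (j + 1) i with hji | hji
    · rw [hMtLow (i + 1) j hj (by omega) (by omega), hMtLow i j hj (by omega) (by omega),
          hMtLow (i + 1) (j + 1) (by omega) (by omega) (by omega),
          hMtLow i (j + 1) (by omega) (by omega) (by omega)]
      exact hm i j hj (by omega) hin
    · have h1 : Mt (i + 1) (j + 1) - Mt i (j + 1) = M (i + 1) i - M i i :=
        key i (j + 1) hi (by omega) hjn
      rcases eq_or_lt_of_le (by omega : i ≤ j) with h | h
      · subst h
        rw [hMtLow (i + 1) i hi (by omega) (by omega), hMtLow i i hi le_rfl (by omega), h1]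
      · rw [key i j hi h (by omega), h1]
  · intro i j hi hin hj hjn
    rcases le_or_gt j i with hji | hji
    · rw [hMtLow (i + 1) j hj (by omega) (by omega), hMtLow i j hj hji (by omega)]
      exact hu i j hj hji hin
    · rw [key i j hi hji hjn]
      exact hu i i hi le_rfl hin
end

section
/- There is an absolute constant C such that for every n×m right substochastic binary matrix P there exists a weighted digraph H that is a DAG, has nonnegative integer edge weights, has size at most C·(n+m)·(log₂(n+m)+1), and contains n distinguished row vertices r[1],…,r[n] and m distinguished column vertices c[1],…,c[m] (all distinct), such that for every 1 ≤ x ≤ n and 1 ≤ y ≤ m there is exactly one directed path in H from r[x] to c[y], and its weight equals Σ_{i=x}^{n} Σ_{j=y}^{m} P[i,j]. -/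
/-- A weighted digraph: a finite vertex set `V ⊆ ℕ`, an edge set `E ⊆ V × V`,
and an integer weight function on edges. -/
structure WDigraph where
  V : Finset ℕ
  E : Finset (ℕ × ℕ)
  w : ℕ × ℕ → ℤ
  edge_fst : ∀ e ∈ E, e.1 ∈ V
  edge_snd : ∀ e ∈ E, e.2 ∈ V

/-- The weight of a walk, given as the list of its vertices, under weight
function `w`: the sum of the weights of its consecutive edges. -/
def walkWeight (w : ℕ × ℕ → ℤ) (l : List ℕ) : ℤ :=
  ((l.zip l.tail).map w).sum

/-- A directed walk in `H`: a nonempty list of vertices of `H` in which each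
consecutive pair is an edge of `H`. -/
def IsWalk (H : WDigraph) (l : List ℕ) : Prop :=
  l ≠ [] ∧ (∀ v ∈ l, v ∈ H.V) ∧ List.Chain' (fun u v => (u, v) ∈ H.E) l

/-- A directed walk in `H` from `u` to `v`. -/
def IsWalkFromTo (H : WDigraph) (l : List ℕ) (u v : ℕ) : Prop :=
  IsWalk H l ∧ l.head? = some u ∧ l.getLast? = some v

/-- A directed path in `H` from `u` to `v`: a walk with no repeated vertex. -/
def IsPathFromTo (H : WDigraph) (l : List ℕ) (u v : ℕ) : Prop :=
  IsWalkFromTo H l u v ∧ l.Nodup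

/-- `H` is a DAG: it contains no directed cycle, i.e. no closed walk using at
least one edge. -/
def IsDAG (H : WDigraph) : Prop :=
  ¬ ∃ (v : ℕ) (l : List ℕ), 2 ≤ l.length ∧ IsWalkFromTo H l v v

/-- `d` is the distance from `u` to `v` in `H` under weight function `w`:
some directed path from `u` to `v` attains weight `d`, and every directed path
from `u` to `v` has weight at least `d`. -/
def HasDistW (H : WDigraph) (w : ℕ × ℕ → ℤ) (u v : ℕ) (d : ℤ) : Prop :=
  (∃ l, IsPathFromTo H l u v ∧ walkWeight w l = d) ∧
  ∀ l, IsPathFromTo H l u v → d ≤ walkWeight w l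

/-- The size of a weighted digraph: number of vertices plus number of edges. -/
def WDigraph.size (H : WDigraph) : ℕ := H.V.card + H.E.card

/-!
The columns are the leaves of a complete binary tree of depth `⌈log₂ m⌉`: the node `t` at height
`h` is the dyadic block of the columns `j` with `(j - 1) / 2 ^ h = t`. The path from row `x` to
column `y` enters at the root and descends to the leaf `y`. Stepping into a left child costs the
mass of the rows `≥ x` in the right sibling and leaving the leaf costs the leaf's own mass, so the
path weighs exactly the mass of the rows `≥ x` in the columns `≥ y`.

The vertex of a node visited from row `x` records only the node's mass in the rows `≥ x`. Equal
masses in a node give equal masses in its children, so the out-edges of a vertex do not depend on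
the row that reached it, and a path to `c[y]` can only follow the ancestors of `y`. A node of mass
`M` has at most `M + 1` vertices, and since a row has at most one nonzero entry, every level of the
tree has at most `n + m` vertices; every vertex has at most two out-edges.
-/

open Finset

namespace List

variable {α : Type*}

theorem isChain_iff_forall_mem_consecutivePairs {R : α → α → Prop} {l : List α} :
    l.IsChain R ↔ ∀ e ∈ l.consecutivePairs, R e.1 e.2 := by
  induction l using List.twoStepInduction with
  | nil => simp
  | singleton => simp [consecutivePairs]
  | cons_cons a b l _ ih => simp_all [consecutivePairs]

theorem IsChain.pairwise_of_comp_lt {β : Type*} [Preorder β] {f : α → β} {l : List α}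
    (h : l.IsChain fun a b => f b < f a) : l.Pairwise fun a b => f b < f a := by
  have h' : (l.map f).IsChain (· > ·) := (isChain_map f).2 h
  exact pairwise_map.1 h'.pairwise

end List

theorem walkWeight_cons_cons (w : ℕ × ℕ → ℤ) (a b : ℕ) (l : List ℕ) :
    walkWeight w (a :: b :: l) = w (a, b) + walkWeight w (b :: l) := by
  simp [walkWeight]

theorem IsPathFromTo.eq_singleton_or_cons {H : WDigraph} {l : List ℕ} {u v : ℕ}
    (hl : IsPathFromTo H l u v) :
    (l = [u] ∧ u = v) ∨ ∃ w l', l = u :: l' ∧ (u, w) ∈ H.E ∧ IsPathFromTo H l' w v := by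
  obtain ⟨⟨⟨hne, hV, hchain⟩, hhead, hlast⟩, hnodup⟩ := hl
  match l, hne with
  | [a], _ =>
    simp only [List.head?_cons, List.getLast?_singleton, Option.some.injEq] at hhead hlast
    exact .inl ⟨by rw [hhead], hhead ▸ hlast⟩
  | a :: b :: l, _ =>
    simp only [List.head?_cons, Option.some.injEq] at hhead
    subst hhead
    have hwalk : IsWalk H (b :: l) :=
      ⟨List.cons_ne_nil _ _, fun x hx => hV x (List.mem_cons_of_mem _ hx), hchain.tail⟩
    refine .inr ⟨b, b :: l, rfl, (List.isChain_cons_cons.1 hchain).1, ⟨hwalk, rfl, ?_⟩,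
      hnodup.of_cons⟩
    rwa [List.getLast?_cons_cons] at hlast

theorem isDAG_of_rank {β : Type*} [Preorder β] {H : WDigraph} (f : ℕ → β)
    (hf : ∀ e ∈ H.E, f e.2 < f e.1) : IsDAG H := by
  rintro ⟨_, l, hlen, ⟨⟨-, -, hchain⟩, hhead, hlast⟩⟩
  match l, hlen with
  | a :: b :: l, _ =>
    simp only [List.head?_cons, Option.some.injEq] at hhead
    subst hhead
    have hpair := (hchain.imp fun u w huw => hf (u, w) huw).pairwise_of_comp_lt
    rw [List.getLast?_cons_cons, List.getLast?_eq_some_iff] at hlast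
    obtain ⟨l', hl'⟩ := hlast
    have hmem : a ∈ b :: l := by rw [hl']; simp
    exact lt_irrefl _ (List.rel_of_pairwise_cons hpair hmem)

namespace WDigraph

def ofWalks {ι : Type*} (V₀ : Finset ℕ) (s : Finset ι) (p : ι → List ℕ)
    (w : ℕ × ℕ → ℤ) : WDigraph where
  V := V₀ ∪ s.biUnion fun i => (p i).toFinset
  E := s.biUnion fun i => (p i).consecutivePairs.toFinset
  w := w
  edge_fst e he := by
    obtain ⟨i, hi, he⟩ := mem_biUnion.1 he
    exact mem_union_right _ <| mem_biUnion.2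
      ⟨i, hi, List.mem_toFinset.2 (List.of_mem_zip (List.mem_toFinset.1 he)).1⟩
  edge_snd e he := by
    obtain ⟨i, hi, he⟩ := mem_biUnion.1 he
    exact mem_union_right _ <| mem_biUnion.2 ⟨i, hi, List.mem_toFinset.2
      (List.mem_of_mem_tail (List.of_mem_zip (List.mem_toFinset.1 he)).2)⟩

variable {ι : Type*} {V₀ : Finset ℕ} {s : Finset ι} {p : ι → List ℕ} {w : ℕ × ℕ → ℤ}

theorem mem_ofWalks_E {e : ℕ × ℕ} :
    e ∈ (ofWalks V₀ s p w).E ↔ ∃ i ∈ s, e ∈ (p i).consecutivePairs := by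
  simp [ofWalks]

theorem isWalk_ofWalks {i : ι} (hi : i ∈ s) (hne : p i ≠ []) :
    IsWalk (ofWalks V₀ s p w) (p i) :=
  ⟨hne, fun _ hv => mem_union_right _ (mem_biUnion.2 ⟨i, hi, List.mem_toFinset.2 hv⟩),
    List.isChain_iff_forall_mem_consecutivePairs.2 fun _ he => mem_ofWalks_E.2 ⟨i, hi, he⟩⟩

end WDigraph

namespace SubstochasticEmulator

/- Vertices are natural numbers whose residue mod 3 tells row, column and tree vertices apart;
the tree vertex `treeV h t a` (node `t` at height `h`, mass `a`) is decoded by `height`, `node`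
and `label`. -/

def rowV (x : ℕ) : ℕ := 3 * x

def colV (y : ℕ) : ℕ := 3 * y + 1

def treeV (h t a : ℕ) : ℕ := 3 * Nat.pair h (Nat.pair t a) + 2

def height (u : ℕ) : ℕ := (Nat.unpair (u / 3)).1

def node (u : ℕ) : ℕ := (Nat.unpair (Nat.unpair (u / 3)).2).1

def label (u : ℕ) : ℕ := (Nat.unpair (Nat.unpair (u / 3)).2).2

@[simp] theorem rowV_mod_three (x : ℕ) : rowV x % 3 = 0 := by unfold rowV; omega

@[simp] theorem colV_mod_three (y : ℕ) : colV y % 3 = 1 := by unfold colV; omega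

@[simp] theorem treeV_mod_three (h t a : ℕ) : treeV h t a % 3 = 2 := by unfold treeV; omega

theorem treeV_div_three (h t a : ℕ) : treeV h t a / 3 = Nat.pair h (Nat.pair t a) := by
  unfold treeV; omega

@[simp] theorem height_treeV (h t a : ℕ) : height (treeV h t a) = h := by
  simp [height, treeV_div_three]

@[simp] theorem node_treeV (h t a : ℕ) : node (treeV h t a) = t := by
  simp [node, treeV_div_three]

@[simp] theorem label_treeV (h t a : ℕ) : label (treeV h t a) = a := by
  simp [label, treeV_div_three]

@[simp] theorem rowV_inj {x x' : ℕ} : rowV x = rowV x' ↔ x = x' := by unfold rowV; omega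

@[simp] theorem colV_inj {y y' : ℕ} : colV y = colV y' ↔ y = y' := by unfold colV; omega

@[simp] theorem treeV_inj {h t a h' t' a' : ℕ} :
    treeV h t a = treeV h' t' a' ↔ h = h' ∧ t = t' ∧ a = a' := by
  refine ⟨fun e => ⟨?_, ?_, ?_⟩, by rintro ⟨rfl, rfl, rfl⟩; rfl⟩
  · simpa using congrArg height e
  · simpa using congrArg node e
  · simpa using congrArg label e

@[simp] theorem rowV_ne_colV (x y : ℕ) : rowV x ≠ colV y := by unfold rowV colV; omega

@[simp] theorem colV_ne_rowV (y x : ℕ) : colV y ≠ rowV x := by unfold rowV colV; omega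

@[simp] theorem treeV_ne_colV (h t a y : ℕ) : treeV h t a ≠ colV y := by
  unfold treeV colV; omega

@[simp] theorem colV_ne_treeV (y h t a : ℕ) : colV y ≠ treeV h t a := by
  unfold treeV colV; omega

@[simp] theorem treeV_ne_rowV (h t a x : ℕ) : treeV h t a ≠ rowV x := by
  unfold treeV rowV; omega

@[simp] theorem rowV_ne_treeV (x h t a : ℕ) : rowV x ≠ treeV h t a := by
  unfold rowV treeV; omega

/-- The node at height `h` containing the column `j ≥ 1`: the nodes at height `h` are the
consecutive blocks of `2 ^ h` columns. -/
def ancestor (h j : ℕ) : ℕ := (j - 1) / 2 ^ h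

theorem ancestor_zero (j : ℕ) : ancestor 0 j = j - 1 := by simp [ancestor]

theorem ancestor_succ (h j : ℕ) : ancestor (h + 1) j = ancestor h j / 2 := by
  simp [ancestor, pow_succ, Nat.div_div_eq_div_mul]

theorem ancestor_mono (h : ℕ) {j j' : ℕ} (hj : j ≤ j') : ancestor h j ≤ ancestor h j' :=
  Nat.div_le_div_right (by omega)

theorem ancestor_eq_zero {h j : ℕ} (hj : j ≤ 2 ^ h) : ancestor h j = 0 :=
  Nat.div_eq_of_lt (by have := Nat.one_le_two_pow (n := h); omega)

def depth (m : ℕ) : ℕ := Nat.clog 2 m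

theorem ancestor_depth {m j : ℕ} (hj : j ≤ m) : ancestor (depth m) j = 0 :=
  ancestor_eq_zero (hj.trans (Nat.le_pow_clog one_lt_two m))

def block (m h t : ℕ) : Finset ℕ := {j ∈ Icc 1 m | ancestor h j = t}

def mass (n : ℕ) (Q : ℕ → ℕ → ℕ) (x : ℕ) (s : Finset ℕ) : ℕ :=
  ∑ i ∈ Icc x n, ∑ j ∈ s, Q i j

def nodeV (n m : ℕ) (Q : ℕ → ℕ → ℕ) (x y h : ℕ) : ℕ :=
  treeV h (ancestor h y) (mass n Q x (block m h (ancestor h y)))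

def descent (n m : ℕ) (Q : ℕ → ℕ → ℕ) (x y : ℕ) : ℕ → List ℕ
  | 0 => [nodeV n m Q x y 0, colV y]
  | h + 1 => nodeV n m Q x y (h + 1) :: descent n m Q x y h

def cpath (n m : ℕ) (Q : ℕ → ℕ → ℕ) (x y : ℕ) : List ℕ :=
  rowV x :: descent n m Q x y (depth m)

/-- An edge into a left child carries the mass of the right sibling (the difference of the
labels), an edge out of a leaf the mass of the leaf; all other edges are free. -/
def weight (e : ℕ × ℕ) : ℤ :=
  if e.1 % 3 = 2 ∧ e.2 % 3 = 1 then label e.1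
  else if e.1 % 3 = 2 ∧ e.2 % 3 = 2 ∧ node e.2 % 2 = 0 then (label e.1 : ℤ) - label e.2
  else 0

def emulator (n m : ℕ) (Q : ℕ → ℕ → ℕ) : WDigraph :=
  WDigraph.ofWalks ((Icc 1 n).image rowV ∪ (Icc 1 m).image colV) (Icc 1 n ×ˢ Icc 1 m)
    (fun p => cpath n m Q p.1 p.2) weight

def rank (m u : ℕ) : ℕ :=
  if u % 3 = 0 then depth m + 2 else if u % 3 = 2 then height u + 1 else 0

def upper (m h y : ℕ) : Finset ℕ := {j ∈ block m h (ancestor h y) | y ≤ j}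

def treeVertices (n m : ℕ) (Q : ℕ → ℕ → ℕ) : Finset ℕ :=
  (range (depth m + 1)).biUnion fun h => ((Icc 1 m).image (ancestor h)).biUnion fun t =>
    ((Icc 1 n).image fun x => mass n Q x (block m h t)).image (treeV h t)

@[simp] theorem weight_rowV (x v : ℕ) : weight (rowV x, v) = 0 := by simp [weight]

@[simp] theorem weight_treeV_colV (h t a y : ℕ) : weight (treeV h t a, colV y) = a := by
  simp [weight]

@[simp] theorem weight_treeV_treeV (h t a h' t' a' : ℕ) :
    weight (treeV h t a, treeV h' t' a') = if t' % 2 = 0 then (a : ℤ) - a' else 0 := by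
  simp [weight]

section Mass

variable {n m : ℕ} {Q : ℕ → ℕ → ℕ}

theorem mass_union {x : ℕ} {s s' : Finset ℕ} (h : Disjoint s s') :
    mass n Q x (s ∪ s') = mass n Q x s + mass n Q x s' := by
  simp [mass, sum_union h, sum_add_distrib]

theorem mass_antitone {x x' : ℕ} (hx : x ≤ x') (s : Finset ℕ) :
    mass n Q x' s ≤ mass n Q x s :=
  sum_le_sum_of_subset (Icc_subset_Icc_left hx)

theorem block_succ (h t : ℕ) :
    block m (h + 1) t = block m h (2 * t) ∪ block m h (2 * t + 1) := by
  ext j; simp only [block, mem_filter, mem_union, mem_Icc, ancestor_succ]; omega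

theorem disjoint_block {h t t' : ℕ} (ht : t ≠ t') : Disjoint (block m h t) (block m h t') :=
  disjoint_filter.2 fun _ _ h₁ h₂ => ht (h₁ ▸ h₂)

theorem mass_block_succ (x h t : ℕ) : mass n Q x (block m (h + 1) t) =
    mass n Q x (block m h (2 * t)) + mass n Q x (block m h (2 * t + 1)) := by
  rw [block_succ, mass_union (disjoint_block (by omega))]

/-- This makes the out-edges of a tree vertex independent of the row that reached it. -/
theorem mass_child_eq {x x' h c : ℕ}
    (heq : mass n Q x (block m (h + 1) (c / 2)) = mass n Q x' (block m (h + 1) (c / 2))) :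
    mass n Q x (block m h c) = mass n Q x' (block m h c) := by
  wlog hxx : x ≤ x' generalizing x x'
  · exact (this heq.symm (by omega)).symm
  have h₁ := mass_antitone (n := n) (Q := Q) hxx (block m h (2 * (c / 2)))
  have h₂ := mass_antitone (n := n) (Q := Q) hxx (block m h (2 * (c / 2) + 1))
  rw [mass_block_succ, mass_block_succ] at heq
  rcases Nat.even_or_odd' c with ⟨k, rfl | rfl⟩
  · rw [show 2 * k / 2 = k by omega] at *; omega
  · rw [show (2 * k + 1) / 2 = k by omega] at *; omega

theorem card_image_mass_le (s : Finset ℕ) :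
    ((Icc 1 n).image fun x => mass n Q x s).card ≤ mass n Q 1 s + 1 := by
  calc _ ≤ (range (mass n Q 1 s + 1)).card := card_le_card fun a ha => by
          obtain ⟨x, hx, rfl⟩ := mem_image.1 ha
          exact mem_range.2 (Nat.lt_succ_of_le (mass_antitone (mem_Icc.1 hx).1 s))
    _ = _ := card_range _

theorem sum_mass_block (x h : ℕ) :
    ∑ t ∈ (Icc 1 m).image (ancestor h), mass n Q x (block m h t) = mass n Q x (Icc 1 m) := by
  simp only [mass, block]
  rw [sum_comm]
  exact sum_congr rfl fun i _ => sum_fiberwise_of_maps_to (fun j hj => mem_image_of_mem _ hj) _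

end Mass

section Descent

variable {n m : ℕ} {Q : ℕ → ℕ → ℕ}

theorem upper_zero {y : ℕ} (hy : 1 ≤ y) : upper m 0 y = block m 0 (ancestor 0 y) := by
  ext j; simp only [upper, block, mem_filter, mem_Icc, ancestor_zero]; omega

theorem upper_depth {y : ℕ} (hy : 1 ≤ y) : upper m (depth m) y = Icc y m := by
  ext j
  simp only [upper, block, mem_filter, mem_Icc]
  constructor
  · rintro ⟨⟨⟨-, hjm⟩, -⟩, hyj⟩
    exact ⟨hyj, hjm⟩
  · rintro ⟨hyj, hjm⟩
    exact ⟨⟨⟨by omega, hjm⟩, by rw [ancestor_depth hjm, ancestor_depth (hyj.trans hjm)]⟩, hyj⟩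

theorem mass_upper_succ (x h y : ℕ) : mass n Q x (upper m (h + 1) y) = mass n Q x (upper m h y) +
    if ancestor h y % 2 = 0 then mass n Q x (block m h (ancestor h y + 1)) else 0 := by
  split_ifs with hc
  · have hdisj : Disjoint (upper m h y) (block m h (ancestor h y + 1)) :=
      disjoint_of_subset_left (filter_subset _ _) (disjoint_block (by omega))
    rw [← mass_union hdisj]
    congr 1
    ext j
    simp only [upper, block, mem_filter, mem_union, mem_Icc, ancestor_succ]
    rcases le_or_gt y j with hyj | hyj
    · have := ancestor_mono h hyj; omega
    · have := ancestor_mono h hyj.le; omega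
  · rw [add_zero]
    congr 1
    ext j
    simp only [upper, block, mem_filter, mem_Icc, ancestor_succ]
    rcases le_or_gt y j with hyj | hyj
    · have := ancestor_mono h hyj; omega
    · omega

theorem weight_nodeV_succ (x y h : ℕ) :
    weight (nodeV n m Q x y (h + 1), nodeV n m Q x y h) =
      if ancestor h y % 2 = 0 then (mass n Q x (block m h (ancestor h y + 1)) : ℤ) else 0 := by
  rw [nodeV, nodeV, weight_treeV_treeV, ancestor_succ]
  split_ifs with hc
  · have := mass_block_succ (n := n) (m := m) (Q := Q) x h (ancestor h y / 2)
    rw [show 2 * (ancestor h y / 2) = ancestor h y by omega] at this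
    rw [this]; push_cast; ring
  · rfl

theorem exists_descent_eq_cons (x y h : ℕ) : ∃ l, descent n m Q x y h = nodeV n m Q x y h :: l := by
  cases h <;> exact ⟨_, rfl⟩

theorem consecutivePairs_descent_succ (x y h : ℕ) :
    (descent n m Q x y (h + 1)).consecutivePairs =
      (nodeV n m Q x y (h + 1), nodeV n m Q x y h) :: (descent n m Q x y h).consecutivePairs := by
  obtain ⟨l, hl⟩ := exists_descent_eq_cons (n := n) (m := m) (Q := Q) x y h
  rw [descent, hl]; rfl

theorem consecutivePairs_cpath (x y : ℕ) :
    (cpath n m Q x y).consecutivePairs =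
      (rowV x, nodeV n m Q x y (depth m)) :: (descent n m Q x y (depth m)).consecutivePairs := by
  obtain ⟨l, hl⟩ := exists_descent_eq_cons (n := n) (m := m) (Q := Q) x y (depth m)
  rw [cpath, hl]; rfl

theorem walkWeight_descent {x y : ℕ} (hy : 1 ≤ y) (h : ℕ) :
    walkWeight weight (descent n m Q x y h) = mass n Q x (upper m h y) := by
  induction h with
  | zero => simp [descent, walkWeight, nodeV, upper_zero hy]
  | succ h ih =>
    obtain ⟨l, hl⟩ := exists_descent_eq_cons (n := n) (m := m) (Q := Q) x y h
    rw [descent, hl, walkWeight_cons_cons, ← hl, ih, weight_nodeV_succ, mass_upper_succ]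
    split_ifs <;> push_cast <;> ring

theorem walkWeight_cpath {x y : ℕ} (hy : 1 ≤ y) :
    walkWeight weight (cpath n m Q x y) = mass n Q x (Icc y m) := by
  obtain ⟨l, hl⟩ := exists_descent_eq_cons (n := n) (m := m) (Q := Q) x y (depth m)
  rw [cpath, hl, walkWeight_cons_cons, weight_rowV, ← hl, walkWeight_descent hy, upper_depth hy,
    zero_add]

theorem getLast?_descent (x y h : ℕ) : (descent n m Q x y h).getLast? = some (colV y) := by
  induction h with
  | zero => simp [descent]
  | succ h ih =>
    obtain ⟨l, hl⟩ := exists_descent_eq_cons (n := n) (m := m) (Q := Q) x y h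
    rw [descent, hl, List.getLast?_cons_cons, ← hl, ih]

theorem mem_descent {x y h v : ℕ} (hv : v ∈ descent n m Q x y h) :
    v = colV y ∨ ∃ k ≤ h, v = nodeV n m Q x y k := by
  induction h with
  | zero => simp only [descent, List.mem_cons, List.not_mem_nil] at hv; grind
  | succ h ih =>
    rcases List.mem_cons.1 hv with rfl | hv
    · exact .inr ⟨h + 1, le_rfl, rfl⟩
    · obtain h₁ | ⟨k, hk, rfl⟩ := ih hv
      · exact .inl h₁
      · exact .inr ⟨k, by omega, rfl⟩

theorem mem_consecutivePairs_descent {x y h : ℕ} {e : ℕ × ℕ}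
    (he : e ∈ (descent n m Q x y h).consecutivePairs) :
    e = (nodeV n m Q x y 0, colV y) ∨
      ∃ k < h, e = (nodeV n m Q x y (k + 1), nodeV n m Q x y k) := by
  induction h with
  | zero => simpa [descent, List.consecutivePairs] using he
  | succ h ih =>
    rw [consecutivePairs_descent_succ, List.mem_cons] at he
    rcases he with rfl | he
    · exact .inr ⟨h, lt_add_one h, rfl⟩
    · obtain h₀ | ⟨k, hk, rfl⟩ := ih he
      · exact .inl h₀
      · exact .inr ⟨k, by omega, rfl⟩

theorem mem_consecutivePairs_cpath {x y : ℕ} {e : ℕ × ℕ}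
    (he : e ∈ (cpath n m Q x y).consecutivePairs) :
    e = (rowV x, nodeV n m Q x y (depth m)) ∨ e = (nodeV n m Q x y 0, colV y) ∨
      ∃ k < depth m, e = (nodeV n m Q x y (k + 1), nodeV n m Q x y k) := by
  rw [consecutivePairs_cpath, List.mem_cons] at he
  exact he.imp_right mem_consecutivePairs_descent

theorem rank_lt_of_mem_consecutivePairs_cpath {x y : ℕ} {e : ℕ × ℕ}
    (he : e ∈ (cpath n m Q x y).consecutivePairs) : rank m e.2 < rank m e.1 := by
  rcases mem_consecutivePairs_cpath he with rfl | rfl | ⟨k, hk, rfl⟩ <;> simp [rank, nodeV]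

theorem weight_nonneg_of_mem_consecutivePairs_cpath {x y : ℕ} {e : ℕ × ℕ}
    (he : e ∈ (cpath n m Q x y).consecutivePairs) : 0 ≤ weight e := by
  rcases mem_consecutivePairs_cpath he with rfl | rfl | ⟨k, hk, rfl⟩
  · simp
  · simp [nodeV]
  · rw [weight_nodeV_succ]; split_ifs <;> positivity

theorem nodup_cpath (x y : ℕ) : (cpath n m Q x y).Nodup :=
  (List.isChain_iff_forall_mem_consecutivePairs.2 fun _ he =>
    rank_lt_of_mem_consecutivePairs_cpath he).pairwise_of_comp_lt.imp fun h e => (e ▸ h).false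

end Descent

section Emulator

variable {n m : ℕ} {Q : ℕ → ℕ → ℕ}

theorem mem_emulator_E {e : ℕ × ℕ} : e ∈ (emulator n m Q).E ↔
    ∃ x ∈ Icc 1 n, ∃ y ∈ Icc 1 m, e ∈ (cpath n m Q x y).consecutivePairs := by
  simp only [emulator, WDigraph.mem_ofWalks_E, Prod.exists, mem_product, and_assoc,
    exists_and_left]

theorem mem_emulator_V {v : ℕ} : v ∈ (emulator n m Q).V ↔
    v ∈ (Icc 1 n).image rowV ∪ (Icc 1 m).image colV ∨
      ∃ x ∈ Icc 1 n, ∃ y ∈ Icc 1 m, v ∈ cpath n m Q x y := by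
  simp only [emulator, WDigraph.ofWalks, mem_union, mem_biUnion, Prod.exists, mem_product,
    List.mem_toFinset, and_assoc, exists_and_left]

theorem rowV_mem_emulator {x : ℕ} (hx : x ∈ Icc 1 n) : rowV x ∈ (emulator n m Q).V :=
  mem_emulator_V.2 (.inl (mem_union_left _ (mem_image_of_mem _ hx)))

theorem colV_mem_emulator {y : ℕ} (hy : y ∈ Icc 1 m) : colV y ∈ (emulator n m Q).V :=
  mem_emulator_V.2 (.inl (mem_union_right _ (mem_image_of_mem _ hy)))

theorem isDAG_emulator : IsDAG (emulator n m Q) :=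
  isDAG_of_rank (rank m) fun _ he => by
    obtain ⟨x, -, y, -, he⟩ := mem_emulator_E.1 he
    exact rank_lt_of_mem_consecutivePairs_cpath he

theorem weight_nonneg_emulator : ∀ e ∈ (emulator n m Q).E, 0 ≤ (emulator n m Q).w e := by
  intro e he
  obtain ⟨x, -, y, -, he⟩ := mem_emulator_E.1 he
  exact weight_nonneg_of_mem_consecutivePairs_cpath he

theorem getLast?_cpath (x y : ℕ) : (cpath n m Q x y).getLast? = some (colV y) := by
  rw [cpath, List.getLast?_cons, getLast?_descent]; rfl

theorem isPathFromTo_cpath {x y : ℕ} (hx : x ∈ Icc 1 n) (hy : y ∈ Icc 1 m) :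
    IsPathFromTo (emulator n m Q) (cpath n m Q x y) (rowV x) (colV y) := by
  have hwalk : IsWalk (emulator n m Q) (cpath n m Q x y) :=
    WDigraph.isWalk_ofWalks (p := fun p : ℕ × ℕ => cpath n m Q p.1 p.2) (i := (x, y))
      (mem_product.2 ⟨hx, hy⟩) (List.cons_ne_nil _ _)
  exact ⟨⟨hwalk, rfl, getLast?_cpath x y⟩, nodup_cpath x y⟩

theorem colV_not_mem_emulator_E (y w : ℕ) : (colV y, w) ∉ (emulator n m Q).E := fun he => by
  obtain ⟨x, -, y', -, he⟩ := mem_emulator_E.1 he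
  rcases mem_consecutivePairs_cpath he with h | h | ⟨k, -, h⟩ <;> simp [nodeV] at h

theorem eq_root_of_mem_emulator_E {x w : ℕ} (he : (rowV x, w) ∈ (emulator n m Q).E) :
    w = treeV (depth m) 0 (mass n Q x (block m (depth m) 0)) := by
  obtain ⟨x', -, y, hy, he⟩ := mem_emulator_E.1 he
  rcases mem_consecutivePairs_cpath he with h | h | ⟨k, -, h⟩ <;>
    simp only [nodeV, Prod.mk.injEq, rowV_inj, rowV_ne_treeV, false_and] at h
  obtain ⟨rfl, rfl⟩ := h
  rw [ancestor_depth (mem_Icc.1 hy).2]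

theorem eq_colV_of_mem_emulator_E {t a w : ℕ} (he : (treeV 0 t a, w) ∈ (emulator n m Q).E) :
    w = colV (t + 1) := by
  obtain ⟨x, -, y, hy, he⟩ := mem_emulator_E.1 he
  rcases mem_consecutivePairs_cpath he with h | h | ⟨k, -, h⟩ <;>
    simp only [nodeV, Prod.mk.injEq, treeV_ne_rowV, treeV_inj, false_and] at h
  · obtain ⟨⟨-, rfl, -⟩, rfl⟩ := h
    rw [ancestor_zero, Nat.sub_add_cancel (mem_Icc.1 hy).1]
  · omega

theorem exists_child_of_mem_emulator_E {h t x w : ℕ}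
    (he : (treeV (h + 1) t (mass n Q x (block m (h + 1) t)), w) ∈ (emulator n m Q).E) :
    ∃ c, c / 2 = t ∧ w = treeV h c (mass n Q x (block m h c)) := by
  obtain ⟨x', -, y, -, he⟩ := mem_emulator_E.1 he
  rcases mem_consecutivePairs_cpath he with hp | hp | ⟨k, -, hp⟩ <;>
    simp only [nodeV, Prod.mk.injEq, treeV_ne_rowV, treeV_inj, false_and] at hp
  · omega
  · obtain ⟨⟨hk, rfl, hmass⟩, rfl⟩ := hp
    obtain rfl : h = k := by omega
    have hchild : mass n Q x' (block m h (ancestor h y)) = mass n Q x (block m h (ancestor h y)) :=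
      mass_child_eq (by rw [← ancestor_succ]; exact hmass.symm)
    exact ⟨ancestor h y, (ancestor_succ h y).symm, by rw [hchild]⟩

theorem eq_of_mem_emulator_E {u w w' : ℕ} (he : (u, w) ∈ (emulator n m Q).E)
    (he' : (u, w') ∈ (emulator n m Q).E) (hw : node w % 2 = node w' % 2) : w = w' := by
  obtain ⟨x, -, y, -, h⟩ := mem_emulator_E.1 he
  rcases mem_consecutivePairs_cpath h with h | h | ⟨k, -, h⟩ <;>
    obtain ⟨rfl, rfl⟩ := Prod.mk.inj h
  · rw [eq_root_of_mem_emulator_E he', eq_root_of_mem_emulator_E he]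
  · rw [nodeV] at he he'
    rw [eq_colV_of_mem_emulator_E he', eq_colV_of_mem_emulator_E he]
  · rw [nodeV] at he he'
    obtain ⟨c, hc, hw₁⟩ := exists_child_of_mem_emulator_E he
    obtain ⟨c', hc', hw₂⟩ := exists_child_of_mem_emulator_E he'
    rw [hw₁, hw₂] at hw ⊢
    simp only [node_treeV] at hw
    obtain rfl : c = c' := by omega
    rfl

theorem eq_descent_of_isPathFromTo {y : ℕ} (hy : 1 ≤ y) (h : ℕ) :
    ∀ {t x l}, IsPathFromTo (emulator n m Q) l (treeV h t (mass n Q x (block m h t))) (colV y) →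
      t = ancestor h y ∧ l = descent n m Q x y h := by
  induction h with
  | zero =>
    intro t x l hl
    rcases hl.eq_singleton_or_cons with ⟨-, h⟩ | ⟨w, l', rfl, hw, hl'⟩
    · exact absurd h (treeV_ne_colV _ _ _ _)
    rw [eq_colV_of_mem_emulator_E hw] at hl'
    rcases hl'.eq_singleton_or_cons with ⟨rfl, h⟩ | ⟨_, _, -, hw', -⟩
    · obtain rfl := colV_inj.1 h
      have ht : t = ancestor 0 (t + 1) := by simp [ancestor_zero]
      exact ⟨ht, by rw [descent, nodeV, ← ht]⟩
    · exact absurd hw' (colV_not_mem_emulator_E _ _)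
  | succ h ih =>
    intro t x l hl
    rcases hl.eq_singleton_or_cons with ⟨-, h⟩ | ⟨w, l', rfl, hw, hl'⟩
    · exact absurd h (treeV_ne_colV _ _ _ _)
    obtain ⟨c, rfl, rfl⟩ := exists_child_of_mem_emulator_E hw
    obtain ⟨rfl, rfl⟩ := ih hl'
    exact ⟨(ancestor_succ h y).symm, by rw [descent, nodeV, ancestor_succ]⟩

theorem eq_cpath_of_isPathFromTo {x y : ℕ} {l : List ℕ} (hy : 1 ≤ y)
    (hl : IsPathFromTo (emulator n m Q) l (rowV x) (colV y)) : l = cpath n m Q x y := by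
  rcases hl.eq_singleton_or_cons with ⟨-, h⟩ | ⟨w, l', rfl, hw, hl'⟩
  · exact absurd h (rowV_ne_colV x y)
  rw [eq_root_of_mem_emulator_E hw] at hl'
  rw [cpath, (eq_descent_of_isPathFromTo hy _ hl').2]

theorem card_emulator_E_le : (emulator n m Q).E.card ≤ 2 * (emulator n m Q).V.card := by
  calc (emulator n m Q).E.card ≤ ((emulator n m Q).V ×ˢ range 2).card := by
        refine card_le_card_of_injOn (fun e => (e.1, node e.2 % 2))
          (fun e he => mem_product.2
            ⟨(emulator n m Q).edge_fst e he, mem_range.2 (Nat.mod_lt _ two_pos)⟩)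
          fun e he e' he' heq => ?_
        obtain ⟨h₁, h₂⟩ := Prod.mk.inj heq
        exact Prod.ext h₁ (eq_of_mem_emulator_E he (h₁ ▸ he' : (e.1, e'.2) ∈ _) h₂)
    _ = 2 * (emulator n m Q).V.card := by rw [card_product, card_range, mul_comm]

theorem card_treeVertices_le :
    (treeVertices n m Q).card ≤ (depth m + 1) * (mass n Q 1 (Icc 1 m) + m) := by
  calc (treeVertices n m Q).card
      ≤ ∑ h ∈ range (depth m + 1), ∑ t ∈ (Icc 1 m).image (ancestor h),
          (mass n Q 1 (block m h t) + 1) :=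
        card_biUnion_le.trans <| sum_le_sum fun h _ => card_biUnion_le.trans <|
          sum_le_sum fun t _ => card_image_le.trans (card_image_mass_le _)
    _ ≤ ∑ h ∈ range (depth m + 1), (mass n Q 1 (Icc 1 m) + m) := sum_le_sum fun h _ => by
        rw [sum_add_distrib, sum_mass_block, sum_const, smul_eq_mul, mul_one]
        exact Nat.add_le_add_left (card_image_le.trans (by simp)) _
    _ = (depth m + 1) * (mass n Q 1 (Icc 1 m) + m) := by simp

theorem nodeV_mem_treeVertices {x y h : ℕ} (hx : x ∈ Icc 1 n) (hy : y ∈ Icc 1 m)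
    (hh : h ≤ depth m) : nodeV n m Q x y h ∈ treeVertices n m Q :=
  mem_biUnion.2 ⟨h, mem_range.2 (by omega), mem_biUnion.2 ⟨ancestor h y, mem_image_of_mem _ hy,
    mem_image_of_mem _ (mem_image_of_mem _ hx)⟩⟩

theorem card_emulator_V_le :
    (emulator n m Q).V.card ≤ n + m + (depth m + 1) * (mass n Q 1 (Icc 1 m) + m) := by
  have hsub : (emulator n m Q).V ⊆
      (Icc 1 n).image rowV ∪ (Icc 1 m).image colV ∪ treeVertices n m Q := by
    intro v hv
    rcases mem_emulator_V.1 hv with hv | ⟨x, hx, y, hy, hv⟩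
    · exact mem_union_left _ hv
    rcases List.mem_cons.1 hv with rfl | hv
    · exact mem_union_left _ (mem_union_left _ (mem_image_of_mem _ hx))
    rcases mem_descent hv with rfl | ⟨k, hk, rfl⟩
    · exact mem_union_left _ (mem_union_right _ (mem_image_of_mem _ hy))
    · exact mem_union_right _ (nodeV_mem_treeVertices hx hy hk)
  calc (emulator n m Q).V.card
      ≤ ((Icc 1 n).image rowV).card + ((Icc 1 m).image colV).card + (treeVertices n m Q).card :=
        (card_le_card hsub).trans <| (card_union_le _ _).trans <|
          Nat.add_le_add_right (card_union_le _ _) _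
    _ ≤ n + m + (depth m + 1) * (mass n Q 1 (Icc 1 m) + m) := by
        gcongr
        · exact card_image_le.trans (by simp)
        · exact card_image_le.trans (by simp)
        · exact card_treeVertices_le

theorem size_emulator_le :
    (emulator n m Q).size ≤ 3 * (n + m + (depth m + 1) * (mass n Q 1 (Icc 1 m) + m)) := by
  have := card_emulator_E_le (n := n) (m := m) (Q := Q)
  have := card_emulator_V_le (n := n) (m := m) (Q := Q)
  unfold WDigraph.size
  omega

theorem depth_le_log (n m : ℕ) : depth m ≤ Nat.log 2 (n + m) + 1 :=
  Nat.clog_le_of_le_pow ((Nat.le_add_left m n).trans (Nat.lt_pow_succ_log_self one_lt_two _).le)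

theorem size_emulator_le_logb (hQ : mass n Q 1 (Icc 1 m) ≤ n) :
    ((emulator n m Q).size : ℝ) ≤ 9 * ((n : ℝ) + m) * (Real.logb 2 ((n : ℝ) + m) + 1) := by
  set L := Nat.log 2 (n + m)
  have hnat : (emulator n m Q).size ≤ 9 * (n + m) * (L + 1) := by
    have h₁ := size_emulator_le (n := n) (m := m) (Q := Q)
    have h₂ : (depth m + 1) * (mass n Q 1 (Icc 1 m) + m) ≤ (L + 2) * (n + m) :=
      Nat.mul_le_mul (by have := depth_le_log n m; omega) (by omega)
    nlinarith
  have hL : (L : ℝ) ≤ Real.logb 2 ((n : ℝ) + m) := by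
    exact_mod_cast Real.natLog_le_logb (n + m) 2
  calc ((emulator n m Q).size : ℝ) ≤ 9 * ((n : ℝ) + m) * (L + 1) := by exact_mod_cast hnat
    _ ≤ 9 * ((n : ℝ) + m) * (Real.logb 2 ((n : ℝ) + m) + 1) := by gcongr

end Emulator

end SubstochasticEmulator

open SubstochasticEmulator

theorem RightSubstochastic.sum_toNat_le_one {n m : ℕ} {P : ℕ → ℕ → ℤ}
    (hP : RightSubstochastic n m P) {i : ℕ} (hi : i ∈ Icc 1 n) :
    ∑ j ∈ Icc 1 m, (P i j).toNat ≤ 1 := by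
  obtain ⟨hi₁, hi₂⟩ := mem_Icc.1 hi
  have hsupp : {j ∈ Icc 1 m | (P i j).toNat ≠ 0}.card ≤ 1 := card_le_one.2 fun j hj j' hj' => by
    simp only [mem_filter, mem_Icc, ne_eq, Int.toNat_eq_zero, not_le] at hj hj'
    exact hP.2 i hi₁ hi₂ j j' hj.1.1 hj.1.2 hj'.1.1 hj'.1.2 hj.2.ne' hj'.2.ne'
  calc ∑ j ∈ Icc 1 m, (P i j).toNat = ∑ j ∈ Icc 1 m with (P i j).toNat ≠ 0, (P i j).toNat :=
        (sum_filter_ne_zero _).symm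
    _ ≤ ∑ j ∈ Icc 1 m with (P i j).toNat ≠ 0, 1 := sum_le_sum fun j hj => by
        simp only [mem_filter, mem_Icc] at hj
        rcases hP.1 i j hi₁ hi₂ hj.1.1 hj.1.2 with h | h <;> simp [h]
    _ ≤ 1 := by simpa using hsupp

theorem RightSubstochastic.mass_toNat_le {n m : ℕ} {P : ℕ → ℕ → ℤ}
    (hP : RightSubstochastic n m P) :
    mass n (fun i j => (P i j).toNat) 1 (Icc 1 m) ≤ n :=
  (sum_le_sum fun _ hi => hP.sum_toNat_le_one hi).trans (by simp)

theorem RightSubstochastic.sum_eq_mass_toNat {n m : ℕ} {P : ℕ → ℕ → ℤ}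
    (hP : RightSubstochastic n m P) {x y : ℕ} (hx : 1 ≤ x) (hy : 1 ≤ y) :
    ∑ i ∈ Icc x n, ∑ j ∈ Icc y m, P i j = mass n (fun i j => (P i j).toNat) x (Icc y m) := by
  simp only [mass, Nat.cast_sum]
  refine sum_congr rfl fun i hi => sum_congr rfl fun j hj => ?_
  simp only [mem_Icc] at hi hj
  rcases hP.1 i j (by omega) hi.2 (by omega) hj.2 with h | h <;> simp [h]

theorem substochastic_emulator :
    ∃ C : ℝ, 0 < C ∧
      ∀ (n m : ℕ) (P : ℕ → ℕ → ℤ), RightSubstochastic n m P →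
        ∃ (H : WDigraph) (r c : ℕ → ℕ),
          IsDAG H ∧
          (∀ e ∈ H.E, 0 ≤ H.w e) ∧
          ((H.size : ℝ) ≤ C * ((n : ℝ) + (m : ℝ)) * (Real.logb 2 ((n : ℝ) + (m : ℝ)) + 1)) ∧
          (∀ x, 1 ≤ x → x ≤ n → r x ∈ H.V) ∧
          (∀ y, 1 ≤ y → y ≤ m → c y ∈ H.V) ∧
          (∀ x x', 1 ≤ x → x ≤ n → 1 ≤ x' → x' ≤ n → r x = r x' → x = x') ∧
          (∀ y y', 1 ≤ y → y ≤ m → 1 ≤ y' → y' ≤ m → c y = c y' → y = y') ∧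
          (∀ x y, 1 ≤ x → x ≤ n → 1 ≤ y → y ≤ m → r x ≠ c y) ∧
          (∀ x y, 1 ≤ x → x ≤ n → 1 ≤ y → y ≤ m →
            ∃ l, IsPathFromTo H l (r x) (c y) ∧
              walkWeight H.w l = ∑ i ∈ Finset.Icc x n, ∑ j ∈ Finset.Icc y m, P i j ∧
              ∀ l', IsPathFromTo H l' (r x) (c y) → l' = l) := by
  refine ⟨9, by norm_num, fun n m P hP => ?_⟩
  refine ⟨emulator n m fun i j => (P i j).toNat, rowV, colV, isDAG_emulator,
    weight_nonneg_emulator, size_emulator_le_logb hP.mass_toNat_le,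
    fun x hx₁ hx₂ => rowV_mem_emulator (mem_Icc.2 ⟨hx₁, hx₂⟩),
    fun y hy₁ hy₂ => colV_mem_emulator (mem_Icc.2 ⟨hy₁, hy₂⟩),
    fun x x' _ _ _ _ => rowV_inj.1, fun y y' _ _ _ _ => colV_inj.1,
    fun x y _ _ _ _ => rowV_ne_colV x y, fun x y hx₁ hx₂ hy₁ hy₂ => ?_⟩
  refine ⟨_, isPathFromTo_cpath (mem_Icc.2 ⟨hx₁, hx₂⟩) (mem_Icc.2 ⟨hy₁, hy₂⟩), ?_,
    fun l hl => eq_cpath_of_isPathFromTo hy₁ hl⟩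
  rw [hP.sum_eq_mass_toNat hx₁ hy₁]
  exact walkWeight_cpath hy₁
end

section
/- There is an absolute constant C such that for every n ≥ 2 and every n×n integer unit-Monge matrix M there exists a weighted digraph H that is a DAG, has integer edge weights, has size at most C·n·(log₂ n + 1), and contains 2n distinct distinguished vertices r[1],…,r[n], c[1],…,c[n], such that for all 1 ≤ i, j ≤ n a directed path from r[i] to c[j] exists in H and the distance d_H(r[i], c[j]) equals M[i,j]. -/
/-!
Write `M i j = M 1 j + ∑ k < i, (M (k + 1) j - M k j)` and arrange the row differences in
dyadic blocks, forming a binary tree of height `⌊log₂ n⌋ + 1`. For each block, cut the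
columns into the maximal intervals on which all its row differences are constant; the tree
vertices are the triples (level, block, interval). Row `i` enters the tree at the level-`0`
block `i - 1` and every walk climbs along the ancestors of that block, the interval at each
level being forced by the target column `j`. Leaving a right child adds the row differences of
its left sibling, which are constant on the parent's interval, and the last edge adds `M 1 j`;
so the weight of any walk from the node of block `c` at level `t` to column `j` is
`M (2 ^ t * c + 1) j`, and every walk from row `i` to column `j` weighs `M i j`.

Unit-Monge-ness makes each row difference a nondecreasing `{-1, 0, 1}`-valued function of the
column, with at most two jumps, so a block of `s` row differences has at most `2 s + 1`
intervals: each level has `O(n)` vertices and edges.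
-/

open Finset

namespace WDigraph

def ofEdges (E : Finset (ℕ × ℕ)) (w : ℕ × ℕ → ℤ) : WDigraph where
  V := E.image Prod.fst ∪ E.image Prod.snd
  E := E
  w := w
  edge_fst _ he := mem_union_left _ (mem_image_of_mem _ he)
  edge_snd _ he := mem_union_right _ (mem_image_of_mem _ he)

lemma size_ofEdges_le (E : Finset (ℕ × ℕ)) (w : ℕ × ℕ → ℤ) :
    (ofEdges E w).size ≤ 3 * #E := by
  have := card_union_le (E.image Prod.fst) (E.image Prod.snd)
  have := card_image_le (s := E) (f := Prod.fst)
  have := card_image_le (s := E) (f := Prod.snd)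
  simp only [size, ofEdges]
  omega

end WDigraph

section Walks

variable {H : WDigraph} {w : ℕ × ℕ → ℤ} {l : List ℕ} {u v x : ℕ} {d : ℤ}

lemma IsWalkFromTo.cons (he : (u, v) ∈ H.E) (hl : IsWalkFromTo H l v x) :
    IsWalkFromTo H (u :: l) u x := by
  obtain ⟨⟨hne, hV, hchain⟩, hhead, hlast⟩ := hl
  obtain ⟨v', l', rfl⟩ := List.exists_cons_of_ne_nil hne
  obtain rfl : v' = v := by simpa using hhead
  refine ⟨⟨List.cons_ne_nil _ _, ?_, List.isChain_cons_cons.mpr ⟨he, hchain⟩⟩, rfl, ?_⟩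
  · simpa [H.edge_fst _ he] using hV
  · simpa using hlast

lemma isWalkFromTo_pair (he : (u, v) ∈ H.E) : IsWalkFromTo H [u, v] u v :=
  .cons he ⟨⟨List.cons_ne_nil _ _, by simpa using H.edge_snd _ he, List.isChain_singleton _⟩,
    rfl, rfl⟩

lemma IsWalkFromTo.exists_cons (hl : IsWalkFromTo H l u x) (hux : u ≠ x) :
    ∃ v l', l = u :: l' ∧ (u, v) ∈ H.E ∧ IsWalkFromTo H l' v x := by
  obtain ⟨⟨hne, hV, hchain⟩, hhead, hlast⟩ := hl
  match l, hhead with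
  | [_], rfl => simp_all
  | _ :: v :: l', rfl =>
    obtain ⟨he, hchain⟩ := List.isChain_cons_cons.mp hchain
    have hV' : ∀ y ∈ v :: l', y ∈ H.V := fun y hy => hV y (List.mem_cons_of_mem _ hy)
    exact ⟨v, v :: l', rfl, he, ⟨List.cons_ne_nil _ _, hV', hchain⟩, rfl,
      by simpa using hlast⟩

lemma IsWalkFromTo.eq_singleton_of_notMem (hl : IsWalkFromTo H l u x)
    (hu : ∀ y, (u, y) ∉ H.E) : l = [u] := by
  by_cases hux : u = x
  · obtain ⟨⟨hne, -, hchain⟩, hhead, -⟩ := hl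
    match l, hhead with
    | [_], rfl => rfl
    | _ :: v :: _, rfl => exact absurd (List.isChain_cons_cons.mp hchain).1 (hu v)
  · obtain ⟨v, -, -, he, -⟩ := hl.exists_cons hux
    exact absurd he (hu v)

lemma walkWeight_singleton : walkWeight w [u] = 0 := rfl

lemma walkWeight_cons (hl : l.head? = some v) :
    walkWeight w (u :: l) = w (u, v) + walkWeight w l := by
  match l, hl with
  | _ :: _, rfl => simp [walkWeight]

lemma IsWalk.nodup_of_lt {f : ℕ → ℕ} (hf : ∀ e ∈ H.E, f e.1 < f e.2) (hl : IsWalk H l) :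
    l.Nodup :=
  ((hl.2.2.imp fun _ _ he => hf _ he).pairwise).imp (fun h he => h.ne (congrArg f he))

lemma isDAG_of_lt {f : ℕ → ℕ} (hf : ∀ e ∈ H.E, f e.1 < f e.2) : IsDAG H := by
  rintro ⟨v, l, hlen, hl, hhead, hlast⟩
  match l, hhead with
  | _ :: w :: l', rfl =>
    have hmem : (w :: l').getLast (List.cons_ne_nil _ _) ∈ w :: l' := List.getLast_mem _
    rw [List.getLast?_eq_some_getLast (List.cons_ne_nil _ _),
      List.getLast_cons (List.cons_ne_nil _ _), Option.some_inj] at hlast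
    rw [hlast] at hmem
    exact (List.nodup_cons.mp (hl.nodup_of_lt hf)).1 hmem

lemma hasDistW_of_walkWeight_eq {f : ℕ → ℕ} (hf : ∀ e ∈ H.E, f e.1 < f e.2)
    (hex : ∃ l, IsWalkFromTo H l u v)
    (hw : ∀ l, IsWalkFromTo H l u v → walkWeight w l = d) : HasDistW H w u v d := by
  obtain ⟨l, hl⟩ := hex
  exact ⟨⟨l, ⟨hl, hl.1.nodup_of_lt hf⟩, hw l hl⟩, fun l hl => (hw l hl.1).ge⟩

lemma HasDistW.left_mem (h : HasDistW H w u v d) : u ∈ H.V := by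
  obtain ⟨⟨l, ⟨⟨⟨hne, hV, -⟩, hhead, -⟩, -⟩, -⟩, -⟩ := h
  exact hV u (List.mem_of_mem_head? hhead)

lemma HasDistW.right_mem (h : HasDistW H w u v d) : v ∈ H.V := by
  obtain ⟨⟨l, ⟨⟨⟨hne, hV, -⟩, -, hlast⟩, -⟩, -⟩, -⟩ := h
  exact hV v (List.mem_of_getLast? hlast)

end Walks

lemma card_filter_ne_pred_le {f : ℕ → ℤ} {a b : ℕ} (hab : a ≤ b)
    (hf : ∀ m ∈ Ioc a b, f (m - 1) ≤ f m) :
    (#{m ∈ Ioc a b | f m ≠ f (m - 1)} : ℤ) ≤ f b - f a := by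
  induction b, hab using Nat.le_induction with
  | base => simp
  | succ b hab ih =>
    have ih := ih fun m hm => hf m (Ioc_subset_Ioc_right b.le_succ hm)
    have hstep := hf (b + 1) (by simp; omega)
    rw [← insert_Ioc_right_eq_Ioc_add_one hab, filter_insert]
    simp only [Nat.add_sub_cancel] at hstep ⊢
    split_ifs with hne
    · rw [card_insert_of_notMem (by simp)]
      push_cast
      omega
    · omega

lemma eq_of_forall_mem_Ioc_eq_pred {α : Type*} {f : ℕ → α} {a b : ℕ} (hab : a ≤ b)
    (hf : ∀ m ∈ Ioc a b, f m = f (m - 1)) : f a = f b := by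
  induction b, hab using Nat.le_induction with
  | base => rfl
  | succ b hab ih =>
    rw [ih fun m hm => hf m (Ioc_subset_Ioc_right b.le_succ hm), hf (b + 1) (by simp; omega)]
    rfl

lemma Nat.findGreatest_findGreatest {P Q : ℕ → Prop} [DecidablePred P] [DecidablePred Q]
    (hPQ : ∀ m, P m → Q m) (j : ℕ) :
    Nat.findGreatest P (Nat.findGreatest Q j) = Nat.findGreatest P j := by
  refine le_antisymm (Nat.findGreatest_mono_right P (Nat.findGreatest_le j)) ?_
  rcases Nat.eq_zero_or_pos (Nat.findGreatest P j) with h | h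
  · simp [h]
  have hP := Nat.findGreatest_of_ne_zero rfl h.ne'
  exact Nat.le_findGreatest (Nat.le_findGreatest (Nat.findGreatest_le j) (hPQ _ hP)) hP

def rowDiff (M : ℕ → ℕ → ℤ) (k j : ℕ) : ℤ := M (k + 1) j - M k j

lemma sub_eq_sub_of_rowDiff_eq {M : ℕ → ℕ → ℤ} {a b s j : ℕ} (hab : a ≤ b)
    (h : ∀ k ∈ Ioc a b, rowDiff M k s = rowDiff M k j) :
    M (b + 1) s - M (a + 1) s = M (b + 1) j - M (a + 1) j := by
  induction b, hab using Nat.le_induction with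
  | base => simp
  | succ b hab ih =>
    have ih := ih fun k hk => h k (Ioc_subset_Ioc_right b.le_succ hk)
    have hb := h (b + 1) (by simp; omega)
    simp only [rowDiff] at hb
    linarith

namespace UnitMongeEmulator

/-- Vertices are natural numbers, tagged `0`, `1`, `2` for rows, columns and tree nodes;
`nodeV t b s` is the interval with left endpoint `s` of block `b` at level `t`. -/
def rowV (i : ℕ) : ℕ := Nat.pair 0 i

def colV (j : ℕ) : ℕ := Nat.pair 1 j

def nodeV (t b s : ℕ) : ℕ := Nat.pair 2 (Nat.pair t (Nat.pair b s))

lemma rowV_injective : Function.Injective rowV := fun _ _ h => by simpa [rowV] using h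

lemma colV_injective : Function.Injective colV := fun _ _ h => by simpa [colV] using h

lemma rowV_ne_colV (i j : ℕ) : rowV i ≠ colV j := by simp [rowV, colV]

lemma nodeV_ne_colV (t b s j : ℕ) : nodeV t b s ≠ colV j := by simp [nodeV, colV]

/-- A tree edge from child `c` at level `t` to its parent `b` weighs the sum of the row
differences `k` with `2 ^ (t + 1) * b < k ≤ 2 ^ t * c` (none for a left child), read at the
parent's interval. -/
def edgeWeight (M : ℕ → ℕ → ℤ) (e : ℕ × ℕ) : ℤ :=
  match e.1.unpair, e.2.unpair with
  | (2, p), (2, q) =>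
    M (2 ^ p.unpair.1 * p.unpair.2.unpair.1 + 1) q.unpair.2.unpair.2 -
      M (2 ^ q.unpair.1 * q.unpair.2.unpair.1 + 1) q.unpair.2.unpair.2
  | _, (1, j) => M 1 j
  | _, _ => 0

@[simp] lemma edgeWeight_nodeV_nodeV (M : ℕ → ℕ → ℤ) (t c x t' b s : ℕ) :
    edgeWeight M (nodeV t c x, nodeV t' b s) = M (2 ^ t * c + 1) s - M (2 ^ t' * b + 1) s := by
  simp [edgeWeight, nodeV]

@[simp] lemma edgeWeight_nodeV_colV (M : ℕ → ℕ → ℤ) (t c x j : ℕ) :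
    edgeWeight M (nodeV t c x, colV j) = M 1 j := by
  simp [edgeWeight, nodeV, colV]

@[simp] lemma edgeWeight_rowV_nodeV (M : ℕ → ℕ → ℤ) (i t b s : ℕ) :
    edgeWeight M (rowV i, nodeV t b s) = 0 := by
  simp [edgeWeight, nodeV, rowV]

variable (n : ℕ) (M : ℕ → ℕ → ℤ)

def block (t b : ℕ) : Finset ℕ := {k ∈ Ico 1 n | (k - 1) / 2 ^ t = b}

def breaks (t b : ℕ) : Finset ℕ :=
  {m ∈ Ioc 1 n | ∃ k ∈ block n t b, rowDiff M k m ≠ rowDiff M k (m - 1)}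

/-- Left endpoints of the maximal column intervals on which all row differences of the block
are constant; `rep t b j` is the one of the interval containing `j`. -/
def cuts (t b : ℕ) : Finset ℕ := insert 1 (breaks n M t b)

def rep (t b j : ℕ) : ℕ := Nat.findGreatest (· ∈ cuts n M t b) j

def height : ℕ := Nat.log 2 n + 1

def rowEdges : Finset (ℕ × ℕ) :=
  (range n).biUnion fun b => (cuts n M 0 b).image fun s => (rowV (b + 1), nodeV 0 b s)

def treeEdges : Finset (ℕ × ℕ) :=
  (range (height n)).biUnion fun t => (range n).biUnion fun b =>
    (cuts n M (t + 1) b).biUnion fun s =>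
      ({2 * b, 2 * b + 1} : Finset ℕ).image fun c =>
        (nodeV t c (rep n M t c s), nodeV (t + 1) b s)

def colEdges : Finset (ℕ × ℕ) :=
  (Icc 1 n).image fun j => (nodeV (height n) 0 (rep n M (height n) 0 j), colV j)

def emulator : WDigraph :=
  .ofEdges (rowEdges n M ∪ treeEdges n M ∪ colEdges n M) (edgeWeight M)

def level (v : ℕ) : ℕ :=
  if v.unpair.1 = 0 then 0
  else if v.unpair.1 = 2 then v.unpair.2.unpair.1 + 1
  else height n + 2

variable {n M}

lemma level_lt_of_mem_edges : ∀ e ∈ (emulator n M).E, level n e.1 < level n e.2 := by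
  intro e he
  simp only [emulator, WDigraph.ofEdges, rowEdges, treeEdges, colEdges, mem_union, mem_biUnion,
    mem_image, mem_range] at he
  rcases he with (⟨b, -, s, -, rfl⟩ | ⟨t, -, b, -, s, -, c, -, rfl⟩) | ⟨j, -, rfl⟩ <;>
    simp [level, rowV, colV, nodeV]

lemma edge_from_nodeV_cases {t c x y : ℕ} (he : (nodeV t c x, y) ∈ (emulator n M).E) :
    (∃ b s, (c = 2 * b ∨ c = 2 * b + 1) ∧ x = rep n M t c s ∧ y = nodeV (t + 1) b s) ∨
      (t = height n ∧ c = 0 ∧ ∃ j ∈ Icc 1 n, x = rep n M t 0 j ∧ y = colV j) := by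
  simp only [emulator, WDigraph.ofEdges, rowEdges, rowV, nodeV, treeEdges, image_insert,
    image_singleton, colEdges, colV, union_assoc, mem_union, mem_biUnion, mem_range, mem_image,
    Prod.mk.injEq, Nat.pair_eq_pair, OfNat.zero_ne_ofNat, false_and, and_false, exists_const,
    mem_insert, true_and, mem_singleton, mem_Icc, false_or] at he
  rcases he with
    ⟨t, -, b, -, s, -, ⟨⟨rfl, rfl, rfl⟩, rfl⟩ | ⟨⟨rfl, rfl, rfl⟩, rfl⟩⟩ |
      ⟨j, hj, ⟨rfl, rfl, rfl⟩, rfl⟩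
  · exact .inl ⟨b, s, .inl rfl, rfl, rfl⟩
  · exact .inl ⟨b, s, .inr rfl, rfl, rfl⟩
  · exact .inr ⟨rfl, rfl, j, mem_Icc.mpr hj, rfl, rfl⟩

lemma edge_from_rowV_cases {i y : ℕ} (he : (rowV i, y) ∈ (emulator n M).E) :
    ∃ s, y = nodeV 0 (i - 1) s := by
  simp only [emulator, WDigraph.ofEdges, rowEdges, rowV, nodeV, treeEdges, image_insert,
    image_singleton, colEdges, colV, union_assoc, mem_union, mem_biUnion, mem_range, mem_image,
    Prod.mk.injEq, Nat.pair_eq_pair, true_and, mem_insert, OfNat.zero_ne_ofNat, false_and,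
    mem_singleton, or_self, and_false, exists_const, mem_Icc, OfNat.ofNat_ne_zero, or_false] at he
  obtain ⟨b, -, s, -, rfl, rfl⟩ := he
  exact ⟨s, rfl⟩

lemma notMem_edges_colV (j y : ℕ) : (colV j, y) ∉ (emulator n M).E := by
  simp [emulator, WDigraph.ofEdges, rowEdges, treeEdges, colEdges, rowV, colV, nodeV]

lemma one_mem_cuts (t b : ℕ) : 1 ∈ cuts n M t b := mem_insert_self _ _

lemma rep_mem_cuts (t b : ℕ) {j : ℕ} (hj : 1 ≤ j) : rep n M t b j ∈ cuts n M t b :=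
  Nat.findGreatest_spec hj (one_mem_cuts t b)

lemma rowDiff_rep {t b k j : ℕ} (hk : k ∈ block n t b) (hj : j ≤ n) :
    rowDiff M k (rep n M t b j) = rowDiff M k j := by
  refine eq_of_forall_mem_Ioc_eq_pred (Nat.findGreatest_le j) fun m hm => ?_
  rw [mem_Ioc] at hm
  have hcut : m ∉ cuts n M t b := Nat.findGreatest_is_greatest hm.1 hm.2
  have hm1 : m ≠ 1 := by rintro rfl; exact hcut (one_mem_cuts t b)
  simp only [cuts, breaks, mem_insert, mem_filter, mem_Ioc, not_or, not_and, not_exists,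
    not_not] at hcut
  exact hcut.2 ⟨by omega, by omega⟩ k hk

section Children

variable {t b c : ℕ} (hc : c = 2 * b ∨ c = 2 * b + 1)
include hc

lemma pow_succ_mul_le_pow_mul : 2 ^ (t + 1) * b ≤ 2 ^ t * c := by
  rw [pow_succ]
  rcases hc with rfl | rfl <;> nlinarith [Nat.one_le_two_pow (n := t)]

lemma block_subset_block_succ : block n t c ⊆ block n (t + 1) b := by
  intro k hk
  simp only [block, mem_filter, pow_succ, ← Nat.div_div_eq_div_mul] at hk ⊢
  exact ⟨hk.1, by omega⟩

lemma cuts_subset_cuts_succ : cuts n M t c ⊆ cuts n M (t + 1) b := by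
  refine insert_subset_insert _ fun m hm => ?_
  simp only [breaks, mem_filter] at hm ⊢
  obtain ⟨hm, k, hk, hne⟩ := hm
  exact ⟨hm, k, block_subset_block_succ hc hk, hne⟩

lemma rep_rep_succ (j : ℕ) : rep n M t c (rep n M (t + 1) b j) = rep n M t c j :=
  Nat.findGreatest_findGreatest (fun _ hm => cuts_subset_cuts_succ hc hm) j

lemma Ioc_subset_block_succ (hcn : 2 ^ t * c < n) :
    Ioc (2 ^ (t + 1) * b) (2 ^ t * c) ⊆ block n (t + 1) b := by
  intro k hk
  rw [mem_Ioc] at hk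
  have hlo : 2 ^ (t + 1) * b = 2 * (2 ^ t * b) := by ring
  have hlo' : b * 2 ^ (t + 1) = 2 * (2 ^ t * b) := by ring
  have hhi : (b + 1) * 2 ^ (t + 1) = 2 * (2 ^ t * b) + 2 * 2 ^ t := by ring
  have hc' : 2 ^ t * c ≤ 2 * (2 ^ t * b) + 2 ^ t := by
    rcases hc with rfl | rfl <;> linarith [Nat.one_le_two_pow (n := t)]
  simp only [block, mem_filter, mem_Ico]
  refine ⟨⟨by omega, by omega⟩, Nat.div_eq_of_lt_le ?_ ?_⟩ <;> omega

lemma sub_at_rep_succ_eq (hcn : 2 ^ t * c < n) {j : ℕ} (hj : j ≤ n) :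
    M (2 ^ t * c + 1) (rep n M (t + 1) b j) - M (2 ^ (t + 1) * b + 1) (rep n M (t + 1) b j) =
      M (2 ^ t * c + 1) j - M (2 ^ (t + 1) * b + 1) j :=
  sub_eq_sub_of_rowDiff_eq (pow_succ_mul_le_pow_mul hc) fun _ hk =>
    rowDiff_rep (Ioc_subset_block_succ hc hcn hk) hj

end Children

lemma rowEdge_mem {b s : ℕ} (hb : b < n) (hs : s ∈ cuts n M 0 b) :
    (rowV (b + 1), nodeV 0 b s) ∈ (emulator n M).E := by
  simp only [emulator, WDigraph.ofEdges, rowEdges, mem_union, mem_biUnion, mem_image, mem_range]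
  exact .inl (.inl ⟨b, hb, s, hs, rfl⟩)

lemma treeEdge_mem {t b c s : ℕ} (ht : t < height n) (hb : b < n) (hs : s ∈ cuts n M (t + 1) b)
    (hc : c = 2 * b ∨ c = 2 * b + 1) :
    (nodeV t c (rep n M t c s), nodeV (t + 1) b s) ∈ (emulator n M).E := by
  simp only [emulator, WDigraph.ofEdges, treeEdges, mem_union, mem_biUnion, mem_image, mem_range]
  exact .inl (.inr ⟨t, ht, b, hb, s, hs, c, by simpa using hc, rfl⟩)

lemma colEdge_mem {j : ℕ} (hj : j ∈ Icc 1 n) :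
    (nodeV (height n) 0 (rep n M (height n) 0 j), colV j) ∈ (emulator n M).E := by
  simp only [emulator, WDigraph.ofEdges, colEdges, mem_union, mem_image]
  exact .inr ⟨j, hj, rfl⟩

lemma exists_walk_nodeV_colV {j : ℕ} (hj : j ∈ Icc 1 n) (d : ℕ) :
    ∀ {t c : ℕ}, t + d = height n → 2 ^ t * c < n →
      ∃ l, IsWalkFromTo (emulator n M) l (nodeV t c (rep n M t c j)) (colV j) := by
  induction d with
  | zero =>
    intro t c ht hcn
    obtain rfl : t = height n := ht
    obtain rfl : c = 0 := by
      by_contra hc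
      have := Nat.le_mul_of_pos_right (2 ^ height n) (Nat.pos_of_ne_zero hc)
      have := Nat.lt_pow_succ_log_self one_lt_two n
      rw [height] at *
      omega
    exact ⟨_, isWalkFromTo_pair (colEdge_mem hj)⟩
  | succ d ih =>
    intro t c ht hcn
    have hc : c = 2 * (c / 2) ∨ c = 2 * (c / 2) + 1 := by omega
    have hbn : 2 ^ (t + 1) * (c / 2) < n := (pow_succ_mul_le_pow_mul hc).trans_lt hcn
    obtain ⟨l, hl⟩ := ih (t := t + 1) (c := c / 2) (by omega) hbn
    have hb : c / 2 < n := (Nat.le_mul_of_pos_left _ (by positivity)).trans_lt hbn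
    have he := treeEdge_mem (M := M) (t := t) (by omega) hb (rep_mem_cuts _ _ (mem_Icc.mp hj).1) hc
    rw [rep_rep_succ hc] at he
    exact ⟨_, hl.cons he⟩

lemma exists_walk_rowV_colV {i j : ℕ} (hi : i ∈ Icc 1 n) (hj : j ∈ Icc 1 n) :
    ∃ l, IsWalkFromTo (emulator n M) l (rowV i) (colV j) := by
  rw [mem_Icc] at hi
  obtain ⟨l, hl⟩ := exists_walk_nodeV_colV (M := M) hj (height n) (t := 0) (c := i - 1)
    (zero_add _) (by simp; omega)
  have he := rowEdge_mem (M := M) (by omega : i - 1 < n) (rep_mem_cuts _ _ (mem_Icc.mp hj).1)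
  rw [Nat.sub_add_cancel hi.1] at he
  exact ⟨_, hl.cons he⟩

lemma walk_nodeV_colV_weight {j : ℕ} (hj : j ≤ n) {l : List ℕ} :
    ∀ {t c x : ℕ}, 2 ^ t * c < n → IsWalkFromTo (emulator n M) l (nodeV t c x) (colV j) →
      x = rep n M t c j ∧ walkWeight (edgeWeight M) l = M (2 ^ t * c + 1) j := by
  induction l with
  | nil => rintro t c x - ⟨⟨hne, -⟩, -⟩; exact absurd rfl hne
  | cons a l ih =>
    intro t c x hcn hl
    obtain ⟨y, l', hl_eq, he, hl'⟩ := hl.exists_cons (nodeV_ne_colV _ _ _ _)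
    obtain ⟨rfl, rfl⟩ := List.cons_eq_cons.mp hl_eq
    rcases edge_from_nodeV_cases he with ⟨b, s, hc, rfl, rfl⟩ | ⟨rfl, rfl, j', -, rfl, rfl⟩
    · obtain ⟨rfl, hw⟩ := ih ((pow_succ_mul_le_pow_mul hc).trans_lt hcn) hl'
      refine ⟨rep_rep_succ hc j, ?_⟩
      rw [walkWeight_cons hl'.2.1, hw, edgeWeight_nodeV_nodeV, sub_at_rep_succ_eq hc hcn hj]
      ring
    · obtain rfl := hl'.eq_singleton_of_notMem (notMem_edges_colV j')
      obtain rfl : j' = j := colV_injective (by simpa using hl'.2.2)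
      refine ⟨rfl, ?_⟩
      rw [walkWeight_cons hl'.2.1, edgeWeight_nodeV_colV, walkWeight_singleton]
      simp

lemma walkWeight_rowV_colV {i j : ℕ} (hi : i ∈ Icc 1 n) (hj : j ≤ n) {l : List ℕ}
    (hl : IsWalkFromTo (emulator n M) l (rowV i) (colV j)) :
    walkWeight (edgeWeight M) l = M i j := by
  rw [mem_Icc] at hi
  obtain ⟨y, l', rfl, he, hl'⟩ := hl.exists_cons (rowV_ne_colV i j)
  obtain ⟨s, rfl⟩ := edge_from_rowV_cases he
  rw [walkWeight_cons hl'.2.1, edgeWeight_rowV_nodeV,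
    (walk_nodeV_colV_weight hj (by simp; omega) hl').2]
  simp [Nat.sub_add_cancel hi.1]

lemma hasDistW_rowV_colV {i j : ℕ} (hi : i ∈ Icc 1 n) (hj : j ∈ Icc 1 n) :
    HasDistW (emulator n M) (emulator n M).w (rowV i) (colV j) (M i j) :=
  hasDistW_of_walkWeight_eq level_lt_of_mem_edges (exists_walk_rowV_colV hi hj)
    fun _ hl => walkWeight_rowV_colV hi (mem_Icc.mp hj).2 hl

lemma emulator_isDAG : IsDAG (emulator n M) := isDAG_of_lt level_lt_of_mem_edges

section Size

variable (hM : IsUnitMonge n n M)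
include hM

lemma card_jumps_rowDiff_le {k : ℕ} (hk : k ∈ Ico 1 n) :
    #{m ∈ Ioc 1 n | rowDiff M k m ≠ rowDiff M k (m - 1)} ≤ 2 := by
  rw [mem_Ico] at hk
  have hjumps := card_filter_ne_pred_le (f := rowDiff M k) (a := 1) (b := n) (by omega)
    fun m hm => by
      rw [mem_Ioc] at hm
      simpa [rowDiff, Nat.sub_add_cancel (by omega : 1 ≤ m)] using
        hM.1 k (m - 1) hk.1 (by omega) (by omega) (by omega)
  have hn := hM.2 k n hk.1 (by omega) (by omega) le_rfl
  have h1 := hM.2 k 1 hk.1 (by omega) le_rfl (by omega)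
  have : rowDiff M k n - rowDiff M k 1 ≤ 2 := by simp only [rowDiff]; omega
  omega

lemma card_breaks_le (t b : ℕ) : #(breaks n M t b) ≤ 2 * #(block n t b) :=
  calc #(breaks n M t b)
      ≤ #((block n t b).biUnion fun k =>
          {m ∈ Ioc 1 n | rowDiff M k m ≠ rowDiff M k (m - 1)}) := by
        refine card_le_card fun m hm => ?_
        obtain ⟨hm, k, hk, hne⟩ := mem_filter.mp hm
        exact mem_biUnion.mpr ⟨k, hk, mem_filter.mpr ⟨hm, hne⟩⟩
    _ ≤ ∑ k ∈ block n t b, 2 :=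
        card_biUnion_le.trans <|
          sum_le_sum fun k hk => card_jumps_rowDiff_le hM (filter_subset _ _ hk)
    _ = 2 * #(block n t b) := by rw [sum_const, smul_eq_mul, mul_comm]

omit hM in
lemma sum_card_block_le (t : ℕ) : ∑ b ∈ range n, #(block n t b) ≤ n :=
  calc ∑ b ∈ range n, #(block n t b) = #{k ∈ Ico 1 n | (k - 1) / 2 ^ t ∈ range n} :=
        sum_card_fiberwise_eq_card_filter _ _ _
    _ ≤ n := (card_filter_le _ _).trans (by simp)

lemma sum_card_cuts_le (t : ℕ) : ∑ b ∈ range n, #(cuts n M t b) ≤ 3 * n :=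
  calc ∑ b ∈ range n, #(cuts n M t b) ≤ ∑ b ∈ range n, (2 * #(block n t b) + 1) :=
        sum_le_sum fun b _ => (card_insert_le _ _).trans (by linarith [card_breaks_le hM t b])
    _ ≤ 3 * n := by
        rw [sum_add_distrib, ← mul_sum, sum_const, card_range, smul_eq_mul, mul_one]
        linarith [sum_card_block_le (n := n) t]

lemma card_rowEdges_le : #(rowEdges n M) ≤ 3 * n :=
  card_biUnion_le.trans ((sum_le_sum fun _ _ => card_image_le).trans (sum_card_cuts_le hM 0))

lemma card_treeEdges_le : #(treeEdges n M) ≤ 6 * n * height n := by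
  have hlevel (t : ℕ) : ∑ b ∈ range n, ∑ _s ∈ cuts n M (t + 1) b, 2 ≤ 6 * n := by
    simp only [sum_const, smul_eq_mul, ← sum_mul]
    linarith [sum_card_cuts_le hM (t + 1)]
  calc #(treeEdges n M)
      ≤ ∑ t ∈ range (height n), ∑ b ∈ range n, ∑ _s ∈ cuts n M (t + 1) b, 2 :=
        card_biUnion_le.trans <| sum_le_sum fun t _ => card_biUnion_le.trans <|
          sum_le_sum fun b _ => card_biUnion_le.trans <|
            sum_le_sum fun s _ => card_image_le.trans card_le_two
    _ ≤ ∑ t ∈ range (height n), 6 * n := sum_le_sum fun t _ => hlevel t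
    _ = 6 * n * height n := by rw [sum_const, card_range, smul_eq_mul, mul_comm]

omit hM in
lemma card_colEdges_le : #(colEdges n M) ≤ n :=
  card_image_le.trans (by simp)

lemma size_emulator_le : (emulator n M).size ≤ 18 * n * (height n + 1) := by
  have hE : #(rowEdges n M ∪ treeEdges n M ∪ colEdges n M) ≤ 4 * n + 6 * n * height n :=
    calc _ ≤ #(rowEdges n M) + #(treeEdges n M) + #(colEdges n M) :=
          (card_union_le _ _).trans (Nat.add_le_add_right (card_union_le _ _) _)
      _ ≤ 3 * n + 6 * n * height n + n :=
          add_le_add (add_le_add (card_rowEdges_le hM) (card_treeEdges_le hM)) card_colEdges_le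
      _ = 4 * n + 6 * n * height n := by ring
  calc (emulator n M).size ≤ 3 * (4 * n + 6 * n * height n) :=
        (WDigraph.size_ofEdges_le _ _).trans (Nat.mul_le_mul_left 3 hE)
    _ ≤ 18 * n * (height n + 1) := by nlinarith

end Size

lemma height_add_one_le {n : ℕ} (hn : 1 ≤ n) :
    (height n + 1 : ℝ) ≤ 2 * (Real.logb 2 n + 1) := by
  have hlog := Real.natLog_le_logb n 2
  have hpos : 0 ≤ Real.logb 2 n := Real.logb_nonneg one_lt_two (by exact_mod_cast hn)
  simp only [height, Nat.cast_add, Nat.cast_one, Nat.cast_ofNat] at *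
  linarith

end UnitMongeEmulator

theorem unitMonge_emulator :
    ∃ C : ℝ, 0 < C ∧
      ∀ (n : ℕ) (M : ℕ → ℕ → ℤ), 2 ≤ n → IsUnitMonge n n M →
        ∃ (H : WDigraph) (r c : ℕ → ℕ),
          IsDAG H ∧
          ((H.size : ℝ) ≤ C * (n : ℝ) * (Real.logb 2 (n : ℝ) + 1)) ∧
          (∀ x, 1 ≤ x → x ≤ n → r x ∈ H.V) ∧
          (∀ y, 1 ≤ y → y ≤ n → c y ∈ H.V) ∧
          (∀ x x', 1 ≤ x → x ≤ n → 1 ≤ x' → x' ≤ n → r x = r x' → x = x') ∧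
          (∀ y y', 1 ≤ y → y ≤ n → 1 ≤ y' → y' ≤ n → c y = c y' → y = y') ∧
          (∀ x y, 1 ≤ x → x ≤ n → 1 ≤ y → y ≤ n → r x ≠ c y) ∧
          (∀ i j, 1 ≤ i → i ≤ n → 1 ≤ j → j ≤ n →
            HasDistW H H.w (r i) (c j) (M i j)) := by
  refine ⟨36, by norm_num, fun n M hn hM => ?_⟩
  have hdist {i j : ℕ} (hi : 1 ≤ i) (hin : i ≤ n) (hj : 1 ≤ j) (hjn : j ≤ n) :=
    UnitMongeEmulator.hasDistW_rowV_colV (M := M) (Finset.mem_Icc.mpr ⟨hi, hin⟩)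
      (Finset.mem_Icc.mpr ⟨hj, hjn⟩)
  refine ⟨UnitMongeEmulator.emulator n M, UnitMongeEmulator.rowV, UnitMongeEmulator.colV,
    UnitMongeEmulator.emulator_isDAG, ?_, fun x hx hxn => (hdist hx hxn hx hxn).left_mem,
    fun y hy hyn => (hdist hy hyn hy hyn).right_mem,
    fun x x' _ _ _ _ h => UnitMongeEmulator.rowV_injective h,
    fun y y' _ _ _ _ h => UnitMongeEmulator.colV_injective h,
    fun x y _ _ _ _ => UnitMongeEmulator.rowV_ne_colV x y, fun i j => hdist⟩
  calc ((UnitMongeEmulator.emulator n M).size : ℝ)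
      ≤ 18 * n * (UnitMongeEmulator.height n + 1) := by
        exact_mod_cast UnitMongeEmulator.size_emulator_le hM
    _ ≤ 18 * n * (2 * (Real.logb 2 n + 1)) := by
        gcongr; exact UnitMongeEmulator.height_add_one_le (by omega)
    _ = 36 * n * (Real.logb 2 n + 1) := by ring
end
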